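/- Let μ be the Lie bracket on ℝ^7 with nonzero basis brackets [e1,e2]=e4, [e1,e3]=e5, [e1,e4]=e6, [e1,e6]=e7, [e2,e3]=e6, [e2,e4]=e7, [e2,e5]=(1/2)e7, [e3,e4]=-(1/2)e7, and let μ̃ be the Lie bracket on ℝ^7 with nonzero basis brackets [e1,e4]=e6, [e2,e5]=(1/2)e7, [e3,e4]=-(1/2)e7. Then the space of derivations of (ℝ^7,μ) has dimension 14, the space of derivations of (ℝ^7,μ̃) has dimension 21, and consequently the Lie algebras (ℝ^7,μ) and (ℝ^7,μ̃) are not isomorphic. -/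

import Mathlib

open Finset

noncomputable section

/-- `ℝ⁷` with its standard basis and standard inner product. -/
abbrev V7 : Type := Fin 7 → ℝ

/-- The standard basis vector `e i`. -/
def e (i : Fin 7) : V7 := Pi.single i 1

/-- The standard inner product on `ℝ⁷`. -/
def dot (x y : V7) : ℝ := ∑ i, x i * y i

/-- Structure constants built from a list of entries `(i, j, k, a)`, each meaning that
`μ (e i) (e j)` has component `a` along `e k` (and `μ (e j) (e i)` has component `-a`);
all unlisted basis brackets are `0`. -/
def toC (L : List (Fin 7 × Fin 7 × Fin 7 × ℝ)) (i j k : Fin 7) : ℝ :=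
  (L.map fun t =>
      (if t.1 = i ∧ t.2.1 = j ∧ t.2.2.1 = k then t.2.2.2 else 0)
    - (if t.1 = j ∧ t.2.1 = i ∧ t.2.2.1 = k then t.2.2.2 else 0)).sum

/-- The bilinear skew-symmetric map on `ℝ⁷` with structure constants `c`. -/
def br (c : Fin 7 → Fin 7 → Fin 7 → ℝ) (x y : V7) : V7 :=
  fun k => ∑ i, ∑ j, x i * y j * c i j k

lemma br_add_left (c : Fin 7 → Fin 7 → Fin 7 → ℝ) (x x' y : V7) :
    br c (x + x') y = br c x y + br c x' y := by
  funext k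
  simp only [br, Pi.add_apply, ← Finset.sum_add_distrib]
  exact Finset.sum_congr rfl fun i _ => Finset.sum_congr rfl fun j _ => by ring

lemma br_smul_left (c : Fin 7 → Fin 7 → Fin 7 → ℝ) (r : ℝ) (x y : V7) :
    br c (r • x) y = r • br c x y := by
  funext k
  simp only [br, Pi.smul_apply, smul_eq_mul, Finset.mul_sum]
  exact Finset.sum_congr rfl fun i _ => Finset.sum_congr rfl fun j _ => by ring

lemma br_add_right (c : Fin 7 → Fin 7 → Fin 7 → ℝ) (x y y' : V7) :
    br c x (y + y') = br c x y + br c x y' := by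
  funext k
  simp only [br, Pi.add_apply, ← Finset.sum_add_distrib]
  exact Finset.sum_congr rfl fun i _ => Finset.sum_congr rfl fun j _ => by ring

lemma br_smul_right (c : Fin 7 → Fin 7 → Fin 7 → ℝ) (r : ℝ) (x y : V7) :
    br c x (r • y) = r • br c x y := by
  funext k
  simp only [br, Pi.smul_apply, smul_eq_mul, Finset.mul_sum]
  exact Finset.sum_congr rfl fun i _ => Finset.sum_congr rfl fun j _ => by ring

lemma br_zero_left (c : Fin 7 → Fin 7 → Fin 7 → ℝ) (y : V7) : br c 0 y = 0 := by
  funext k; simp [br]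

lemma br_zero_right (c : Fin 7 → Fin 7 → Fin 7 → ℝ) (x : V7) : br c x 0 = 0 := by
  funext k; simp [br]

/-- The space of derivations of the algebra `(ℝ⁷, br c)`, i.e. the linear maps `D` with
`D (μ x y) = μ (D x) y + μ x (D y)` for all `x, y`, as a submodule of the endomorphisms. -/
def derivations (c : Fin 7 → Fin 7 → Fin 7 → ℝ) : Submodule ℝ (Module.End ℝ V7) where
  carrier := {D | ∀ x y, D (br c x y) = br c (D x) y + br c x (D y)}
  add_mem' := by
    intro D E hD hE x y
    simp only [LinearMap.add_apply, hD x y, hE x y, br_add_left, br_add_right]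
    abel
  zero_mem' := by
    intro x y
    simp [br_zero_left, br_zero_right]
  smul_mem' := by
    intro r D hD x y
    simp only [LinearMap.smul_apply, hD x y, smul_add, br_smul_left, br_smul_right]

/-- The Jacobi identity for the bracket `br c`. -/
def Jacobi (c : Fin 7 → Fin 7 → Fin 7 → ℝ) : Prop :=
  ∀ x y z : V7, br c (br c x y) z + br c (br c y z) x + br c (br c z x) y = 0

/-- Skew-symmetry of the bracket `br c`. -/
def Skew (c : Fin 7 → Fin 7 → Fin 7 → ℝ) : Prop :=
  ∀ x y : V7, br c x y = - br c y x

/-- The diagonal endomorphism `diag (a 1, …, a 7)` of `ℝ⁷`, `e i ↦ a i • e i`. -/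
def diagL (a : Fin 7 → ℝ) : Module.End ℝ V7 :=
  LinearMap.pi fun i => a i • LinearMap.proj i

/-- Structure constants of `μ`: `[e1,e2]=e4, [e1,e3]=e5, [e1,e4]=e6, [e1,e6]=e7,
[e2,e3]=e6, [e2,e4]=e7, [e2,e5]=(1/2)e7, [e3,e4]=-(1/2)e7`. -/
def ca : Fin 7 → Fin 7 → Fin 7 → ℝ :=
  toC [(0, 1, 3, (1:ℝ)),
   (0, 2, 4, 1),
   (0, 3, 5, 1),
   (0, 5, 6, 1),
   (1, 2, 5, 1),
   (1, 3, 6, 1),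
   (1, 4, 6, 1/2),
   (2, 3, 6, -(1/2))]

/-- Structure constants of `μ̃`: `[e1,e4]=e6, [e2,e5]=(1/2)e7, [e3,e4]=-(1/2)e7`. -/
def cb : Fin 7 → Fin 7 → Fin 7 → ℝ :=
  toC [(0, 3, 5, (1:ℝ)),
   (1, 4, 6, 1/2),
   (2, 3, 6, -(1/2))]

/-! The derivation equations are linear in the entries `D (e l) k` of `D`. Solving them exhibits
a set of entries which are free coordinates on the space of derivations: `14` of them for `μ`,
`21` for `μ̃`. Conjugation by an isomorphism maps derivations to derivations, so isomorphic
algebras have derivation spaces of equal dimension. -/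

lemma e_apply (i j : Fin 7) : e i j = if j = i then 1 else 0 := Pi.single_apply i 1 j

lemma apply_eq_sum_mul_apply_e (D : Module.End ℝ V7) (x : V7) (k : Fin 7) :
    D x k = ∑ l, x l * D (e l) k := by
  conv_lhs => rw [pi_eq_sum_univ' x]
  simp [Finset.sum_apply, e]

lemma toMatrix'_apply_eq_apply_e (D : Module.End ℝ V7) (k l : Fin 7) :
    LinearMap.toMatrix' D k l = D (e l) k :=
  LinearMap.toMatrix'_apply D k l

lemma mem_derivations_apply_e {c : Fin 7 → Fin 7 → Fin 7 → ℝ} {D : Module.End ℝ V7}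
    (hD : D ∈ derivations c) (i j k : Fin 7) :
    ∑ l, br c (e i) (e j) l * D (e l) k = br c (D (e i)) (e j) k + br c (e i) (D (e j)) k := by
  rw [← apply_eq_sum_mul_apply_e, hD]
  rfl

def matrixEntries {n : ℕ} (p : Fin n → Fin 7 × Fin 7) :
    Module.End ℝ V7 →ₗ[ℝ] (Fin n → ℝ) :=
  LinearMap.pi fun m => LinearMap.proj (p m).1 ∘ₗ LinearMap.applyₗ (e (p m).2)

lemma matrixEntries_apply {n : ℕ} (p : Fin n → Fin 7 × Fin 7) (D : Module.End ℝ V7)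
    (m : Fin n) : matrixEntries p D m = D (e (p m).2) (p m).1 := rfl

lemma matrixEntries_toLin' {n : ℕ} (p : Fin n → Fin 7 × Fin 7) (M : Matrix (Fin 7) (Fin 7) ℝ)
    (m : Fin n) : matrixEntries p (Matrix.toLin' M) m = M (p m).1 (p m).2 := by
  rw [matrixEntries_apply, ← toMatrix'_apply_eq_apply_e, LinearMap.toMatrix'_toLin']

lemma finrank_eq_of_coordinates {K M : Type*} [Field K] [AddCommGroup M] [Module K M] {n : ℕ}
    {S : Submodule K M} (π : M →ₗ[K] (Fin n → K)) (Φ : (Fin n → K) → M)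
    (hΦ : ∀ q, Φ q ∈ S) (hπΦ : ∀ q, π (Φ q) = q) (hΦπ : ∀ x ∈ S, Φ (π x) = x) :
    Module.finrank K S = n := by
  have hbij : Function.Bijective (π ∘ₗ S.subtype) := by
    refine ⟨fun x y hxy => Subtype.ext ?_, fun q => ⟨⟨Φ q, hΦ q⟩, hπΦ q⟩⟩
    rw [← hΦπ x x.2, ← hΦπ y y.2]
    exact congrArg Φ hxy
  rw [(LinearEquiv.ofBijective _ hbij).finrank_eq, Module.finrank_fin_fun]

section Iso

variable {c c' : Fin 7 → Fin 7 → Fin 7 → ℝ} {g : V7 ≃ₗ[ℝ] V7}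

lemma symm_br_eq (hg : ∀ x y, g (br c x y) = br c' (g x) (g y)) (x y : V7) :
    g.symm (br c' x y) = br c (g.symm x) (g.symm y) :=
  g.injective (by rw [hg, g.apply_symm_apply, g.apply_symm_apply, g.apply_symm_apply])

lemma conj_mem_derivations (hg : ∀ x y, g (br c x y) = br c' (g x) (g y))
    {D : Module.End ℝ V7} (hD : D ∈ derivations c) : g.conj D ∈ derivations c' := by
  intro x y
  simp only [LinearEquiv.conj_apply_apply, symm_br_eq hg, hD (g.symm x) (g.symm y), map_add, hg,
    g.apply_symm_apply]

lemma finrank_derivations_le_of_iso (hg : ∀ x y, g (br c x y) = br c' (g x) (g y)) :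
    Module.finrank ℝ (derivations c) ≤ Module.finrank ℝ (derivations c') := by
  rw [← LinearEquiv.finrank_map_eq g.conj]
  refine Submodule.finrank_mono ?_
  rintro _ ⟨D, hD, rfl⟩
  exact conj_mem_derivations hg hD

lemma finrank_derivations_eq_of_iso (hg : ∀ x y, g (br c x y) = br c' (g x) (g y)) :
    Module.finrank ℝ (derivations c) = Module.finrank ℝ (derivations c') :=
  le_antisymm (finrank_derivations_le_of_iso hg)
    (finrank_derivations_le_of_iso (g := g.symm) (symm_br_eq hg))

end Iso

lemma br_ca (x y : V7) : br ca x y = ![0, 0, 0, x 0 * y 1 - x 1 * y 0, x 0 * y 2 - x 2 * y 0,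
    x 0 * y 3 - x 3 * y 0 + (x 1 * y 2 - x 2 * y 1),
    x 0 * y 5 - x 5 * y 0 + (x 1 * y 3 - x 3 * y 1) + (x 1 * y 4 - x 4 * y 1) / 2
      - (x 2 * y 3 - x 3 * y 2) / 2] := by
  funext k
  fin_cases k <;> simp [br, ca, toC, Fin.sum_univ_seven] <;> ring

lemma br_cb (x y : V7) : br cb x y = ![0, 0, 0, 0, 0, x 0 * y 3 - x 3 * y 0,
    (x 1 * y 4 - x 4 * y 1) / 2 - (x 2 * y 3 - x 3 * y 2) / 2] := by
  funext k
  fin_cases k <;> simp [br, cb, toC, Fin.sum_univ_seven] <;> ring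

/-- The general derivation of `μ` in the basis `e`. -/
def derivMatrixA (q : Fin 14 → ℝ) : Matrix (Fin 7) (Fin 7) ℝ :=
  !![q 13 / 5, 0, 0, 0, 0, 0, 0;
     -2 * q 6, 2 * q 13 / 5, 0, 0, 0, 0, 0;
     2 * q 5 - 4 * q 6 - 2 * q 12, q 1, 2 * q 13 / 5, 0, 0, 0, 0;
     2 * q 11 - 2 * q 4, 3 * q 5 - 4 * q 6 - 2 * q 12, 3 * q 6, 3 * q 13 / 5, 0, 0, 0;
     2 * q 3 + 4 * q 4 - 2 * q 10 - 4 * q 11, q 0, 4 * q 12 - 3 * q 5 - 2 * q 6, q 1,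
       3 * q 13 / 5, 0, 0;
     q 2, q 3, q 4, q 5, q 6, 4 * q 13 / 5, 0;
     q 7, q 8, q 9, q 10, q 11, q 12, q 13]

def derivCoordsA : Fin 14 → Fin 7 × Fin 7 :=
  ![(4, 1), (4, 3), (5, 0), (5, 1), (5, 2), (5, 3), (5, 4),
    (6, 0), (6, 1), (6, 2), (6, 3), (6, 4), (6, 5), (6, 6)]

lemma toLin'_derivMatrixA_mem (q : Fin 14 → ℝ) :
    Matrix.toLin' (derivMatrixA q) ∈ derivations ca := by
  intro x y
  funext k
  fin_cases k <;>
    simp [br_ca, Matrix.mulVec, dotProduct, Fin.sum_univ_seven, derivMatrixA] <;> ring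

lemma matrixEntries_toLin'_derivMatrixA (q : Fin 14 → ℝ) :
    matrixEntries derivCoordsA (Matrix.toLin' (derivMatrixA q)) = q := by
  funext m
  rw [matrixEntries_toLin']
  fin_cases m <;> rfl

set_option maxHeartbeats 1000000 in
lemma derivMatrixA_matrixEntries {D : Module.End ℝ V7} (hD : D ∈ derivations ca) :
    derivMatrixA (matrixEntries derivCoordsA D) = LinearMap.toMatrix' D := by
  have h := mem_derivations_apply_e hD
  have h01 := h 0 1
  have h02 := h 0 2
  have h03 := h 0 3
  have h04 := h 0 4
  have h05 := h 0 5
  have h12 := h 1 2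
  have h13 := h 1 3
  simp [Fin.forall_fin_succ, br_ca, e_apply, Fin.sum_univ_seven] at h01 h02 h03 h04 h05 h12 h13
  casesm* _ ∧ _
  ext k l
  rw [toMatrix'_apply_eq_apply_e]
  fin_cases k <;> fin_cases l <;>
    simp [derivMatrixA, matrixEntries_apply, derivCoordsA] <;> linarith

lemma finrank_derivations_ca : Module.finrank ℝ (derivations ca) = 14 :=
  finrank_eq_of_coordinates (matrixEntries derivCoordsA) (fun q => Matrix.toLin' (derivMatrixA q))
    toLin'_derivMatrixA_mem matrixEntries_toLin'_derivMatrixA fun D hD => by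
      rw [derivMatrixA_matrixEntries hD, Matrix.toLin'_toMatrix']

/-- The general derivation of `μ̃` in the basis `e`. -/
def derivMatrixB (q : Fin 21 → ℝ) : Matrix (Fin 7) (Fin 7) ℝ :=
  !![q 13 - q 4, 0, 0, q 0, 0, 0, 0;
     0, q 20 - q 7, 0, -q 3, q 1, 0, 0;
     -2 * q 19, q 6, q 20 - q 4, q 2, q 3, 0, 0;
     0, 0, 0, q 4, 0, 0, 0;
     0, q 5, 0, q 6, q 7, 0, 0;
     q 8, q 9, q 10, q 11, q 12, q 13, 0;
     q 14, q 15, q 16, q 17, q 18, q 19, q 20]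

def derivCoordsB : Fin 21 → Fin 7 × Fin 7 :=
  ![(0, 3), (1, 4), (2, 3), (2, 4), (3, 3), (4, 1), (4, 3), (4, 4),
    (5, 0), (5, 1), (5, 2), (5, 3), (5, 4), (5, 5),
    (6, 0), (6, 1), (6, 2), (6, 3), (6, 4), (6, 5), (6, 6)]

lemma toLin'_derivMatrixB_mem (q : Fin 21 → ℝ) :
    Matrix.toLin' (derivMatrixB q) ∈ derivations cb := by
  intro x y
  funext k
  fin_cases k <;>
    simp [br_cb, Matrix.mulVec, dotProduct, Fin.sum_univ_seven, derivMatrixB] <;> ring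

lemma matrixEntries_toLin'_derivMatrixB (q : Fin 21 → ℝ) :
    matrixEntries derivCoordsB (Matrix.toLin' (derivMatrixB q)) = q := by
  funext m
  rw [matrixEntries_toLin']
  fin_cases m <;> rfl

set_option maxHeartbeats 1000000 in
lemma derivMatrixB_matrixEntries {D : Module.End ℝ V7} (hD : D ∈ derivations cb) :
    derivMatrixB (matrixEntries derivCoordsB D) = LinearMap.toMatrix' D := by
  have h := mem_derivations_apply_e hD
  have h01 := h 0 1
  have h02 := h 0 2
  have h03 := h 0 3
  have h04 := h 0 4
  have h06 := h 0 6
  have h12 := h 1 2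
  have h13 := h 1 3
  have h14 := h 1 4
  have h23 := h 2 3
  have h24 := h 2 4
  have h34 := h 3 4
  simp [Fin.forall_fin_succ, br_cb, e_apply, Fin.sum_univ_seven]
    at h01 h02 h03 h04 h06 h12 h13 h14 h23 h24 h34
  casesm* _ ∧ _
  ext k l
  rw [toMatrix'_apply_eq_apply_e]
  fin_cases k <;> fin_cases l <;>
    simp [derivMatrixB, matrixEntries_apply, derivCoordsB] <;> linarith

lemma finrank_derivations_cb : Module.finrank ℝ (derivations cb) = 21 :=
  finrank_eq_of_coordinates (matrixEntries derivCoordsB) (fun q => Matrix.toLin' (derivMatrixB q))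
    toLin'_derivMatrixB_mem matrixEntries_toLin'_derivMatrixB fun D hD => by
      rw [derivMatrixB_matrixEntries hD, Matrix.toLin'_toMatrix']

/-- The derivations of `(ℝ⁷, μ)` form a space of dimension 14, those of `(ℝ⁷, μ̃)` one of
dimension 21, and consequently the two Lie algebras are not isomorphic. -/
theorem stmt :
    Module.finrank ℝ ↥(derivations ca) = 14 ∧
    Module.finrank ℝ ↥(derivations cb) = 21 ∧
    ¬ ∃ g : V7 ≃ₗ[ℝ] V7, ∀ x y : V7, g (br ca x y) = br cb (g x) (g y) := by
  refine ⟨finrank_derivations_ca, finrank_derivations_cb, ?_⟩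
  rintro ⟨g, hg⟩
  have h := finrank_derivations_eq_of_iso hg
  rw [finrank_derivations_ca, finrank_derivations_cb] at h
  omega
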